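/- Define K_{S¹} : ℝ → ℝ by K_{S¹}(θ) = (π/2) sin(2θ) sgn(θ) − (θ/2) sin(2θ) − (1/8) cos(2θ). Then for every θ ∈ [0, π/2), one has (1/4) · ( K_{S¹}(θ) + K_{S¹}(θ + π/2) + K_{S¹}(θ − π/2) + K_{S¹}(θ − π) ) = (π/8) · |sin(2θ)|. -/
import Mathlib


open Real

noncomputable section

/-- The 1D Biot–Savart kernel
`K_{S¹}(θ) = (π/2) sin(2θ) sgn(θ) − (θ/2) sin(2θ) − (1/8) cos(2θ)`. -/
def KS1 (θ : ℝ) : ℝ :=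
  Real.pi / 2 * Real.sin (2 * θ) * Real.sign θ - θ / 2 * Real.sin (2 * θ)
    - 1 / 8 * Real.cos (2 * θ)

/-- The 4-fold symmetrization of the 1D Biot–Savart kernel:
`(1/4)(K_{S¹}(θ) + K_{S¹}(θ + π/2) + K_{S¹}(θ − π/2) + K_{S¹}(θ − π)) = (π/8)|sin(2θ)|`
for `θ ∈ [0, π/2)`. -/
theorem KS1_fourfold_symmetrization (θ : ℝ) (h0 : 0 ≤ θ) (h1 : θ < Real.pi / 2) :
    1 / 4 * (KS1 θ + KS1 (θ + Real.pi / 2) + KS1 (θ - Real.pi / 2) + KS1 (θ - Real.pi)) =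
      Real.pi / 8 * |Real.sin (2 * θ)| := by
  have hpi := Real.pi_pos
  have hs : 0 ≤ Real.sin (2 * θ) := by
    apply Real.sin_nonneg_of_nonneg_of_le_pi <;> nlinarith
  rw [abs_of_nonneg hs]
  have e1 : Real.sin (2 * (θ + Real.pi / 2)) = -Real.sin (2 * θ) := by
    rw [show 2 * (θ + Real.pi / 2) = 2 * θ + Real.pi by ring, Real.sin_add_pi]
  have e2 : Real.cos (2 * (θ + Real.pi / 2)) = -Real.cos (2 * θ) := by
    rw [show 2 * (θ + Real.pi / 2) = 2 * θ + Real.pi by ring, Real.cos_add_pi]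
  have e3 : Real.sin (2 * (θ - Real.pi / 2)) = -Real.sin (2 * θ) := by
    rw [show 2 * (θ - Real.pi / 2) = 2 * θ - Real.pi by ring, Real.sin_sub_pi]
  have e4 : Real.cos (2 * (θ - Real.pi / 2)) = -Real.cos (2 * θ) := by
    rw [show 2 * (θ - Real.pi / 2) = 2 * θ - Real.pi by ring, Real.cos_sub_pi]
  have e5 : Real.sin (2 * (θ - Real.pi)) = Real.sin (2 * θ) := by
    rw [show 2 * (θ - Real.pi) = 2 * θ - 2 * Real.pi by ring, Real.sin_sub_two_pi]
  have e6 : Real.cos (2 * (θ - Real.pi)) = Real.cos (2 * θ) := by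
    rw [show 2 * (θ - Real.pi) = 2 * θ - 2 * Real.pi by ring, Real.cos_sub_two_pi]
  have s1 : Real.sign (θ + Real.pi / 2) = 1 := Real.sign_of_pos (by linarith)
  have s2 : Real.sign (θ - Real.pi / 2) = -1 := Real.sign_of_neg (by linarith)
  have s3 : Real.sign (θ - Real.pi) = -1 := Real.sign_of_neg (by nlinarith)
  have key : Real.pi / 2 * Real.sin (2 * θ) * Real.sign θ
      = Real.pi / 2 * Real.sin (2 * θ) * Real.sign θ := rfl
  rcases eq_or_lt_of_le h0 with h | h
  · have : Real.sin (2 * θ) = 0 := by rw [← h]; simp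
    simp only [KS1, e1, e2, e3, e4, e5, e6, s1, s2, s3, this]
    ring
  · have s0 : Real.sign θ = 1 := Real.sign_of_pos h
    simp only [KS1, e1, e2, e3, e4, e5, e6, s1, s2, s3, s0]
    ring
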